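/- arXiv:1504.03932 — 4 statements merged into one kernel-verified Lean document; each statement's English description precedes it below -/
import Mathlib

section
/- Let 0 < p ≤ 1, let b be a weight on (0,∞) with 0 < B(t) = ∫₀ᵗ b < ∞ for all t > 0, and let f : (0,∞) → [0,∞) be non-increasing. Then there is a constant C depending only on p such that for all t > 0, ∫₀ᵗ f(y)b(y) dy ≤ C (∫₀ᵗ f(y)^p B(y)^{p-1} b(y) dy)^{1/p}. -/
/-!
Write `B y = ∫_{(0,y]} b` and `F y = ∫_{(0,y]} f b`. Since `f` is non-increasing,
`f y B y ≤ F y ≤ F t` for `y ≤ t`, hence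
`f y = f y ^ p f y ^ (1 - p) ≤ F t ^ (1 - p) f y ^ p B y ^ (p - 1)`.
Integrating against `b` gives `F t ≤ F t ^ (1 - p) I` with `I` the right-hand integral, so
`F t ^ p ≤ I` when `F t` is finite; the general case follows by truncating `f` at height `n`.
In particular the constant can be taken to be `1`.
-/

open MeasureTheory Set
open scoped ENNReal

namespace ENNReal

theorem le_rpow_sub_mul_rpow_mul_rpow {p : ℝ} (hp0 : 0 ≤ p) (hp1 : p ≤ 1) {x B F : ℝ≥0∞}
    (hB0 : B ≠ 0) (hBtop : B ≠ ∞) (h : x * B ≤ F) :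
    x ≤ F ^ (1 - p) * (x ^ p * B ^ (p - 1)) := by
  have hB : B ^ (1 - p) * B ^ (p - 1) = 1 := by
    rw [← ENNReal.rpow_add _ _ hB0 hBtop]; simp
  calc x = x ^ p * x ^ (1 - p) := by
        rw [← ENNReal.rpow_add_of_nonneg _ _ hp0 (sub_nonneg.2 hp1)]; simp
    _ = x ^ p * ((x * B) ^ (1 - p) * B ^ (p - 1)) := by
        rw [ENNReal.mul_rpow_of_nonneg _ _ (sub_nonneg.2 hp1), mul_assoc, hB, mul_one]
    _ ≤ x ^ p * (F ^ (1 - p) * B ^ (p - 1)) := by gcongr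
    _ = F ^ (1 - p) * (x ^ p * B ^ (p - 1)) := by ring

theorem le_rpow_one_div_of_le_rpow_sub_mul {p : ℝ} (hp0 : 0 < p) {x y : ℝ≥0∞} (hx : x ≠ ∞)
    (h : x ≤ x ^ (1 - p) * y) : x ≤ y ^ (1 / p) := by
  rw [one_div, ENNReal.le_rpow_inv_iff hp0]
  rcases eq_or_ne x 0 with rfl | hx0
  · simp [ENNReal.zero_rpow_of_pos hp0]
  have hsplit : x ^ (1 - p) * x ^ p = x := by
    rw [← ENNReal.rpow_add _ _ hx0 hx]; simp
  refine (ENNReal.mul_le_mul_iff_right ?_ ?_).1 (hsplit.trans_le h)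
  · exact (ENNReal.rpow_pos (pos_iff_ne_zero.2 hx0) hx).ne'
  · exact ENNReal.rpow_ne_top_of_ne_zero hx0 hx

end ENNReal

section

variable {μ : Measure ℝ} {b f : ℝ → ℝ≥0∞} {p t : ℝ}

theorem AntitoneOn.mul_setLIntegral_Ioc_le (hf : AntitoneOn f (Ioi 0)) (y : ℝ) :
    f y * ∫⁻ s in Ioc 0 y, b s ∂μ ≤ ∫⁻ s in Ioc 0 y, f s * b s ∂μ :=
  (lintegral_const_mul_le _ _).trans <| setLIntegral_mono' measurableSet_Ioc fun _ hs =>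
    mul_le_mul_left (hf hs.1 (hs.1.trans_le hs.2) hs.2) _

theorem setLIntegral_Ioc_mul_le_rpow_of_ne_top (hp0 : 0 < p) (hp1 : p ≤ 1)
    (hB : ∀ y, 0 < y → 0 < ∫⁻ s in Ioc 0 y, b s ∂μ ∧ ∫⁻ s in Ioc 0 y, b s ∂μ < ⊤)
    (hf : AntitoneOn f (Ioi 0)) (hF : ∫⁻ y in Ioc 0 t, f y * b y ∂μ ≠ ∞) :
    ∫⁻ y in Ioc 0 t, f y * b y ∂μ ≤
      (∫⁻ y in Ioc 0 t, f y ^ p * (∫⁻ s in Ioc 0 y, b s ∂μ) ^ (p - 1) * b y ∂μ) ^ (1 / p) := by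
  set F := ∫⁻ y in Ioc 0 t, f y * b y ∂μ
  refine ENNReal.le_rpow_one_div_of_le_rpow_sub_mul hp0 hF ?_
  calc F ≤ ∫⁻ y in Ioc 0 t,
        F ^ (1 - p) * (f y ^ p * (∫⁻ s in Ioc 0 y, b s ∂μ) ^ (p - 1) * b y) ∂μ := by
        refine setLIntegral_mono' measurableSet_Ioc fun y hy => ?_
        have hfB : f y * ∫⁻ s in Ioc 0 y, b s ∂μ ≤ F :=
          (hf.mul_setLIntegral_Ioc_le y).trans (lintegral_mono_set (Ioc_subset_Ioc_right hy.2))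
        have hfy := ENNReal.le_rpow_sub_mul_rpow_mul_rpow hp0.le hp1 (hB y hy.1).1.ne'
          (hB y hy.1).2.ne hfB
        calc f y * b y
            ≤ F ^ (1 - p) * (f y ^ p * (∫⁻ s in Ioc 0 y, b s ∂μ) ^ (p - 1)) * b y := by gcongr
          _ = _ := by ring
    _ = _ := lintegral_const_mul' _ _ (ENNReal.rpow_ne_top_of_nonneg (sub_nonneg.2 hp1) hF)

theorem setLIntegral_Ioc_mul_le_rpow (hp0 : 0 < p) (hp1 : p ≤ 1)
    (hB : ∀ y, 0 < y → 0 < ∫⁻ s in Ioc 0 y, b s ∂μ ∧ ∫⁻ s in Ioc 0 y, b s ∂μ < ⊤)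
    (hf : AntitoneOn f (Ioi 0)) (hb : Measurable b) (hfm : Measurable f) (ht : 0 < t) :
    ∫⁻ y in Ioc 0 t, f y * b y ∂μ ≤
      (∫⁻ y in Ioc 0 t, f y ^ p * (∫⁻ s in Ioc 0 y, b s ∂μ) ^ (p - 1) * b y ∂μ) ^ (1 / p) := by
  set g : ℕ → ℝ → ℝ≥0∞ := fun n y => min (f y) n
  have hg_anti (n : ℕ) : AntitoneOn (g n) (Ioi 0) := fun x hx y hy hxy =>
    min_le_min_right _ (hf hx hy hxy)
  have hg_fin (n : ℕ) : ∫⁻ y in Ioc 0 t, g n y * b y ∂μ ≠ ∞ := by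
    refine ne_top_of_le_ne_top ?_ (lintegral_mono fun y => mul_le_mul_left (min_le_right _ _) _)
    rw [lintegral_const_mul' _ _ (ENNReal.natCast_ne_top n)]
    exact ENNReal.mul_ne_top (ENNReal.natCast_ne_top n) (hB t ht).2.ne
  have hg_sup : ∫⁻ y in Ioc 0 t, f y * b y ∂μ = ⨆ n, ∫⁻ y in Ioc 0 t, g n y * b y ∂μ := by
    rw [← lintegral_iSup (f := fun n y => g n y * b y)
      (fun n => (hfm.min measurable_const).mul hb)
      fun m n hmn y => mul_le_mul_left (min_le_min_left _ (Nat.cast_le.2 hmn)) _]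
    congr with y
    rw [← ENNReal.iSup_mul, ← inf_iSup_eq, ENNReal.iSup_natCast, inf_top_eq]
  rw [hg_sup]
  refine iSup_le fun n =>
    (setLIntegral_Ioc_mul_le_rpow_of_ne_top hp0 hp1 hB (hg_anti n) (hg_fin n)).trans ?_
  gcongr with y
  exact min_le_left _ _

end

/-- For `0 < p ≤ 1`, a weight `b` with `0 < B(t) < ∞`, and non-increasing
`f ≥ 0`, there is `C` depending only on `p` with
`∫₀ᵗ f b ≤ C (∫₀ᵗ f^p B^{p-1} b)^{1/p}` for all `t > 0`. -/
theorem stmt_1 (p : ℝ) (hp0 : 0 < p) (hp1 : p ≤ 1)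
    (b f : ℝ → ℝ≥0∞) (hb : Measurable b) (hf : Measurable f)
    (hB : ∀ t : ℝ, 0 < t →
      0 < (∫⁻ y in Ioc 0 t, b y) ∧ (∫⁻ y in Ioc 0 t, b y) < ⊤)
    (hmono : AntitoneOn f (Ioi (0 : ℝ))) :
    ∃ C : ℝ≥0∞, 0 < C ∧ C < ⊤ ∧
      ∀ t : ℝ, 0 < t →
        (∫⁻ y in Ioc 0 t, f y * b y)
          ≤ C * (∫⁻ y in Ioc 0 t,
              (f y) ^ p * (∫⁻ s in Ioc 0 y, b s) ^ (p - 1) * b y) ^ (1 / p) :=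
  ⟨1, one_pos, ENNReal.one_lt_top, fun _ ht => by
    rw [one_mul]
    exact setLIntegral_Ioc_mul_le_rpow hp0 hp1 hB hmono hb hf ht⟩
end

section
/- Let u ∈ C(0,∞) be a weight, b a weight with 0 < B(t) = ∫₀ᵗ b < ∞ for all t > 0, and define (T_{u,b} g)(t) = sup_{t ≤ τ < ∞} (u(τ)/B(τ)) ∫₀^τ g b. Then for every h ∈ 𝔐⁺(0,∞) and every x > 0, T_{u,b}(∫_·^∞ h)(x) is equivalent (with absolute constants) to sup_{x ≤ τ < ∞} (u(τ)/B(τ)) ∫₀^τ h(y)B(y) dy + sup_{x ≤ τ < ∞} u(τ) ∫_τ^∞ h(s) ds. -/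
open MeasureTheory Set
open scoped ENNReal

/-!
By Tonelli, for `τ > 0`,
`∫₀^τ (∫_s^∞ h) b(s) ds = ∫₀^τ h(y) B(y) dy + B(τ) ∫_τ^∞ h`,
so after multiplying by `u(τ)/B(τ)` the function whose essential supremum is `T_{u,b}(∫_·^∞ h)(x)` is the
sum of the two functions on the other side. The essential supremum of a sum of two nonnegative
functions is at most the sum of their essential suprema and at least each of them, which gives the
constants `1` and `2`.
-/

section Fubini

variable {μ : Measure ℝ} {b h : ℝ → ℝ≥0∞}

theorem setLIntegral_lintegral_Ioi_mul_eq [SFinite μ] (hb : Measurable b) (hh : Measurable h)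
    {S : Set ℝ} :
    ∫⁻ s in S, (∫⁻ y in Ioi s, h y ∂μ) * b s ∂μ = ∫⁻ y, h y * ∫⁻ s in Iio y ∩ S, b s ∂μ ∂μ := by
  have hF : Measurable (Function.uncurry fun s y => (Ioi s).indicator h y * b s) := by
    have : (Function.uncurry fun s y => (Ioi s).indicator h y * b s)
        = fun p : ℝ × ℝ => {q : ℝ × ℝ | q.1 < q.2}.indicator (fun q => h q.2) p * b p.1 := by
      ext p
      simp [Function.uncurry, Set.indicator]
    rw [this]
    exact ((hh.comp measurable_snd).indicator (measurableSet_lt measurable_fst measurable_snd)).mul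
      (hb.comp measurable_fst)
  calc ∫⁻ s in S, (∫⁻ y in Ioi s, h y ∂μ) * b s ∂μ
      = ∫⁻ s in S, ∫⁻ y, (Ioi s).indicator h y * b s ∂μ ∂μ := by
        refine lintegral_congr fun s => ?_
        rw [lintegral_mul_const _ (hh.indicator measurableSet_Ioi),
          lintegral_indicator measurableSet_Ioi]
    _ = ∫⁻ y, ∫⁻ s in S, (Ioi s).indicator h y * b s ∂μ ∂μ :=
        lintegral_lintegral_swap hF.aemeasurable
    _ = ∫⁻ y, h y * ∫⁻ s in Iio y ∩ S, b s ∂μ ∂μ := by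
        refine lintegral_congr fun y => ?_
        have hind : ∀ s, (Ioi s).indicator h y * b s = h y * (Iio y).indicator b s := fun s => by
          by_cases hs : s < y <;> simp [Set.indicator, hs]
        simp_rw [hind]
        rw [lintegral_const_mul _ (hb.indicator measurableSet_Iio),
          lintegral_indicator measurableSet_Iio, Measure.restrict_restrict measurableSet_Iio]

theorem setLIntegral_Ioc_lintegral_Ioi_mul [SFinite μ] [NullSingletonClass μ]
    (hb : Measurable b) (hh : Measurable h) (a τ : ℝ) :
    ∫⁻ s in Ioc a τ, (∫⁻ y in Ioi s, h y ∂μ) * b s ∂μ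
      = ∫⁻ y in Ioc a τ, h y * (∫⁻ s in Ioc a y, b s ∂μ) ∂μ
        + (∫⁻ s in Ioc a τ, b s ∂μ) * ∫⁻ y in Ioi τ, h y ∂μ := by
  have hsplit : ∀ y, h y * ∫⁻ s in Iio y ∩ Ioc a τ, b s ∂μ
      = (Ioc a τ).indicator (fun y => h y * ∫⁻ s in Ioc a y, b s ∂μ) y
        + (Ioi τ).indicator (fun y => h y * ∫⁻ s in Ioc a τ, b s ∂μ) y := fun y => by
    rcases le_or_gt y τ with hyτ | hτy
    · have hIoo : Iio y ∩ Ioc a τ = Ioo a y := by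
        ext s
        simp only [mem_inter_iff, mem_Iio, mem_Ioc, mem_Ioo]
        constructor
        · rintro ⟨hsy, has, -⟩
          exact ⟨has, hsy⟩
        · rintro ⟨has, hsy⟩
          exact ⟨hsy, has, hsy.le.trans hyτ⟩
      rw [hIoo, restrict_Ioo_eq_restrict_Ioc,
        indicator_of_notMem (notMem_Ioi.2 hyτ), add_zero]
      rcases le_or_gt y a with hya | hay
      · rw [Ioc_eq_empty (not_lt.2 hya), indicator_of_notMem (fun hy => hya.not_gt hy.1)]
        simp
      · rw [indicator_of_mem (show y ∈ Ioc a τ from ⟨hay, hyτ⟩)]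
    · have hIoc : Iio y ∩ Ioc a τ = Ioc a τ := inter_eq_right.2 fun s hs => hs.2.trans_lt hτy
      rw [hIoc, indicator_of_notMem (fun hy => hτy.not_ge hy.2), indicator_of_mem (mem_Ioi.2 hτy), zero_add]
  rw [setLIntegral_lintegral_Ioi_mul_eq hb hh, lintegral_congr hsplit,
    lintegral_add_right _ ((hh.mul_const _).indicator measurableSet_Ioi),
    lintegral_indicator measurableSet_Ioc, lintegral_indicator measurableSet_Ioi,
    lintegral_mul_const _ hh, mul_comm (∫⁻ y in Ioi τ, h y ∂μ)]

end Fubini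

theorem ENNReal.essSup_add_essSup_le_two_mul {α : Type*} [MeasurableSpace α] {μ : Measure α}
    (f g : α → ℝ≥0∞) : essSup f μ + essSup g μ ≤ 2 * essSup (f + g) μ := by
  rw [two_mul]
  exact add_le_add (essSup_mono_ae (ae_of_all _ fun _ => le_self_add))
    (essSup_mono_ae (ae_of_all _ fun _ => le_add_self))

/-- With `(T_{u,b} g)(t) = ess sup_{t ≤ τ} (u(τ)/B(τ)) ∫₀^τ g b`, for every
`h ∈ 𝔐⁺` and `x > 0`,
`T_{u,b}(∫_·^∞ h)(x) ≈ ess sup_{x ≤ τ} (u(τ)/B(τ)) ∫₀^τ h B + ess sup_{x ≤ τ} u(τ) ∫_τ^∞ h`,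
with absolute constants (independent of `u, b, h, x`). -/
theorem stmt_3 :
    ∃ C₁ C₂ : ℝ≥0∞, 0 < C₁ ∧ C₁ < ⊤ ∧ 0 < C₂ ∧ C₂ < ⊤ ∧
      ∀ u b h : ℝ → ℝ≥0∞, Measurable u → Measurable b → Measurable h →
        ContinuousOn u (Ioi (0 : ℝ)) →
        (∀ t : ℝ, 0 < t →
          0 < (∫⁻ y in Ioc 0 t, b y) ∧ (∫⁻ y in Ioc 0 t, b y) < ⊤) →
        ∀ x : ℝ, 0 < x →
          (essSup (fun τ => u τ / (∫⁻ y in Ioc 0 τ, b y)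
              * ∫⁻ s in Ioc 0 τ, (∫⁻ y in Ioi s, h y) * b s)
              (volume.restrict (Ici x))
            ≤ C₁ * (essSup (fun τ => u τ / (∫⁻ y in Ioc 0 τ, b y)
                  * ∫⁻ y in Ioc 0 τ, h y * ∫⁻ s in Ioc 0 y, b s)
                  (volume.restrict (Ici x))
                + essSup (fun τ => u τ * ∫⁻ s in Ioi τ, h s)
                  (volume.restrict (Ici x))))
          ∧
          (essSup (fun τ => u τ / (∫⁻ y in Ioc 0 τ, b y)
                * ∫⁻ y in Ioc 0 τ, h y * ∫⁻ s in Ioc 0 y, b s)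
                (volume.restrict (Ici x))
              + essSup (fun τ => u τ * ∫⁻ s in Ioi τ, h s)
                (volume.restrict (Ici x))
            ≤ C₂ * essSup (fun τ => u τ / (∫⁻ y in Ioc 0 τ, b y)
                * ∫⁻ s in Ioc 0 τ, (∫⁻ y in Ioi s, h y) * b s)
                (volume.restrict (Ici x))) := by
  refine ⟨1, 2, one_pos, ENNReal.one_lt_top, two_pos, ENNReal.ofNat_lt_top,
    fun u b h _ hb hh _ hB x hx => ?_⟩
  have hsum : (fun τ => u τ / (∫⁻ y in Ioc 0 τ, b y)
        * ∫⁻ s in Ioc 0 τ, (∫⁻ y in Ioi s, h y) * b s)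
      =ᵐ[volume.restrict (Ici x)] (fun τ => u τ / (∫⁻ y in Ioc 0 τ, b y)
          * ∫⁻ y in Ioc 0 τ, h y * ∫⁻ s in Ioc 0 y, b s)
        + fun τ => u τ * ∫⁻ s in Ioi τ, h s := by
    filter_upwards [self_mem_ae_restrict measurableSet_Ici] with τ hτ
    obtain ⟨hB0, hBtop⟩ := hB τ (hx.trans_le hτ)
    rw [setLIntegral_Ioc_lintegral_Ioi_mul hb hh, mul_add, ← mul_assoc,
      ENNReal.div_mul_cancel hB0.ne' hBtop.ne, Pi.add_apply]
  rw [essSup_congr_ae hsum, one_mul]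
  exact ⟨ENNReal.essSup_add_le _ _, ENNReal.essSup_add_essSup_le_two_mul _ _⟩
end

section
/- Let u be a continuous weight on (0,∞) such that u(x)/B(x) is non-increasing, where B(t) = ∫₀ᵗ b for a weight b with 0 < B < ∞ on (0,∞), and let f : (0,∞) → [0,∞) be measurable. Then for every t > 0: sup_{t ≤ τ < ∞} (u(τ)/B(τ)) · sup_{0 < y ≤ τ} f(y)B(y) = max{ (u(t)/B(t)) · sup_{0 < y ≤ t} f(y)B(y), sup_{t ≤ y < ∞} f(y)u(y) }. -/
/-!
Write `φ = u / B` and `S τ = ess sup_{(0,τ]} f B`, so that `f u = φ · f B` on `(0,∞)`.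
For `τ ≥ t` we have `S τ ≤ max (S t) (ess sup_{(t,τ]} f B)`, and `φ` is non-increasing, which
gives `≤`. Conversely `φ` is right-continuous (`u` is continuous and `B` is right-continuous by
continuity of measure from above) and `S` is non-decreasing, so `φ y · c` with `c ≤ S τ` for all
`τ > y` is a limit of values `φ τ · S τ` taken on sets of positive measure just right of `y`.
This applies to `c = S t` at `y = t`, and to `c = f B y` at almost every `y ≥ t`.
-/

open MeasureTheory Set Filter
open scoped ENNReal Topology

/-- `x ↦ x * ⊤` is not continuous at `0`, but its sublevel sets are still closed. -/
theorem ENNReal.isClosed_setOf_mul_le (c L : ℝ≥0∞) : IsClosed {x : ℝ≥0∞ | x * c ≤ L} := by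
  rcases eq_or_ne c ⊤ with rfl | hc
  · rcases eq_or_ne L ⊤ with rfl | hL
    · simp
    · convert isClosed_singleton (x := (0 : ℝ≥0∞)) using 1
      ext x
      rcases eq_or_ne x 0 with rfl | hx
      · simp
      · simp [hx, ENNReal.mul_top hx, hL]
  · exact isClosed_le (ENNReal.continuous_mul_const hc) continuous_const

theorem frequently_nhdsGT_of_ae_restrict_Ici {μ : Measure ℝ} [μ.IsOpenPosMeasure]
    {p : ℝ → Prop} {t y : ℝ} (h : ∀ᵐ x ∂μ.restrict (Ici t), p x) (hy : t ≤ y) :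
    ∃ᶠ x in 𝓝[>] y, p x := by
  intro hnot
  obtain ⟨δ, hδ, hsub⟩ := (nhdsGT_basis y).eventually_iff.1 hnot
  have hnull : μ (Ioo y δ) = 0 := by
    have h' := ae_iff.1 h
    rw [Measure.restrict_apply' measurableSet_Ici] at h'
    refine measure_mono_null (fun x hx => ?_) h'
    exact ⟨hsub hx, hy.trans hx.1.le⟩
  exact (isOpen_Ioo.measure_pos μ (nonempty_Ioo.2 hδ)).ne' hnull

theorem Measure.continuousWithinAt_Ioi_measure_Ioc {ν : Measure ℝ} {a y r : ℝ} (hyr : y < r)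
    (hr : ν (Ioc a r) ≠ ∞) : ContinuousWithinAt (fun x => ν (Ioc a x)) (Ioi y) y := by
  have h := tendsto_measure_biInter_gt (μ := ν) (s := fun x => Ioc a x) (a := y)
    (fun _ _ => measurableSet_Ioc.nullMeasurableSet)
    (fun _ _ _ hij => Ioc_subset_Ioc_right hij) ⟨r, hyr, hr⟩
  have hinter : (⋂ x > y, Ioc a x) = Ioc a y := by
    ext z
    simp only [mem_iInter, mem_Ioc]
    exact ⟨fun hz => ⟨(hz (y + 1) (by linarith)).1, forall_gt_imp_ge_iff_le_of_dense.1
      fun x hx => (hz x hx).2⟩, fun hz x hx => ⟨hz.1, hz.2.trans hx.le⟩⟩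
  rwa [hinter] at h

section EssSupIoc

variable {μ : Measure ℝ} {F : ℝ → ℝ≥0∞} {a : ℝ}

theorem monotone_essSup_restrict_Ioc : Monotone fun τ => essSup F (μ.restrict (Ioc a τ)) :=
  fun _ _ h => essSup_mono_measure' (Measure.restrict_mono (Ioc_subset_Ioc_right h) le_rfl)

theorem essSup_restrict_Ioc_le_max (t τ : ℝ) :
    essSup F (μ.restrict (Ioc a τ)) ≤
      max (essSup F (μ.restrict (Ioc a t))) (essSup F (μ.restrict (Ioc t τ))) := by
  have hsub : Ioc a τ ⊆ Ioc a t ∪ Ioc t τ := fun x hx => by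
    rcases le_or_gt x t with h | h
    exacts [Or.inl ⟨hx.1, h⟩, Or.inr ⟨h, hx.2⟩]
  refine essSup_le_of_ae_le _ (ae_mono (Measure.restrict_mono hsub le_rfl) ?_)
  refine (ae_restrict_union_iff _ _ _).2 ⟨?_, ?_⟩
  · exact (ENNReal.ae_le_essSup F).mono fun _ h => h.trans (le_max_left _ _)
  · exact (ENNReal.ae_le_essSup F).mono fun _ h => h.trans (le_max_right _ _)

theorem ae_le_essSup_restrict_Ioc :
    ∀ᵐ y ∂μ, ∀ τ, y ∈ Ioo a τ → F y ≤ essSup F (μ.restrict (Ioc a τ)) := by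
  have hrat : ∀ᵐ y ∂μ, ∀ q : ℚ, y ∈ Ioc a (q : ℝ) → F y ≤ essSup F (μ.restrict (Ioc a q)) :=
    ae_all_iff.2 fun q => (ae_restrict_iff' measurableSet_Ioc).1 (ENNReal.ae_le_essSup F)
  filter_upwards [hrat] with y hy τ hτ
  obtain ⟨q, hyq, hqτ⟩ := exists_rat_btwn hτ.2
  exact (hy q ⟨hτ.1, hyq.le⟩).trans (monotone_essSup_restrict_Ioc hqτ.le)

variable {φ : ℝ → ℝ≥0∞} {t : ℝ}

theorem essSup_mul_essSup_restrict_Ioc_le (hφ : AntitoneOn φ (Ici t)) :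
    essSup (fun τ => φ τ * essSup F (μ.restrict (Ioc a τ))) (μ.restrict (Ici t)) ≤
      max (φ t * essSup F (μ.restrict (Ioc a t)))
        (essSup (fun y => φ y * F y) (μ.restrict (Ici t))) := by
  refine essSup_le_of_ae_le _ ?_
  filter_upwards [ae_restrict_mem measurableSet_Ici] with τ (hτ : t ≤ τ)
  have htail : φ τ * essSup F (μ.restrict (Ioc t τ)) ≤
      essSup (fun y => φ y * F y) (μ.restrict (Ici t)) := by
    rw [← ENNReal.essSup_const_mul]
    refine (essSup_mono_ae ?_).trans (essSup_mono_measure'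
      (Measure.restrict_mono (fun _ hy => le_of_lt hy.1 : Ioc t τ ⊆ Ici t) le_rfl))
    filter_upwards [ae_restrict_mem measurableSet_Ioc] with y hy
    exact mul_le_mul_left (hφ (mem_Ici.2 hy.1.le) (mem_Ici.2 hτ) hy.2) _
  calc φ τ * essSup F (μ.restrict (Ioc a τ))
      ≤ φ τ * max (essSup F (μ.restrict (Ioc a t))) (essSup F (μ.restrict (Ioc t τ))) :=
        mul_le_mul_right (essSup_restrict_Ioc_le_max t τ) _
    _ = max (φ τ * essSup F (μ.restrict (Ioc a t))) (φ τ * essSup F (μ.restrict (Ioc t τ))) :=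
        mul_max _ _ _
    _ ≤ _ := max_le_max (mul_le_mul_left (hφ (le_refl t) hτ hτ) _) htail

theorem le_essSup_mul_essSup_restrict_Ioc [μ.IsOpenPosMeasure] (hat : a < t)
    (hφ : ∀ y ≥ t, ContinuousWithinAt φ (Ioi y) y) :
    max (φ t * essSup F (μ.restrict (Ioc a t)))
        (essSup (fun y => φ y * F y) (μ.restrict (Ici t))) ≤
      essSup (fun τ => φ τ * essSup F (μ.restrict (Ioc a τ))) (μ.restrict (Ici t)) := by
  set L := essSup (fun τ => φ τ * essSup F (μ.restrict (Ioc a τ))) (μ.restrict (Ici t))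
  have hL : ∀ᵐ τ ∂μ.restrict (Ici t), φ τ * essSup F (μ.restrict (Ioc a τ)) ≤ L :=
    ENNReal.ae_le_essSup _
  have key : ∀ y ≥ t, ∀ c, (∀ τ > y, c ≤ essSup F (μ.restrict (Ioc a τ))) → φ y * c ≤ L := by
    intro y hy c hc
    refine (ENNReal.isClosed_setOf_mul_le c L).mem_of_frequently_of_tendsto ?_ (hφ y hy)
    refine (frequently_nhdsGT_of_ae_restrict_Ici hL hy).mp ?_
    filter_upwards [self_mem_nhdsWithin] with τ hτ hLτ
    exact (mul_le_mul_right (hc τ hτ) _).trans hLτ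
  refine max_le (key t le_rfl _ fun τ hτ => monotone_essSup_restrict_Ioc hτ.le) ?_
  refine essSup_le_of_ae_le _ ?_
  filter_upwards [ae_restrict_mem measurableSet_Ici, ae_restrict_of_ae ae_le_essSup_restrict_Ioc]
    with y (hy : t ≤ y) hF
  exact key y hy _ fun τ hτ => hF τ ⟨hat.trans_le hy, hτ⟩

theorem essSup_mul_essSup_restrict_Ioc [μ.IsOpenPosMeasure] (hat : a < t)
    (hφ : AntitoneOn φ (Ici t)) (hφc : ∀ y ≥ t, ContinuousWithinAt φ (Ioi y) y) :
    essSup (fun τ => φ τ * essSup F (μ.restrict (Ioc a τ))) (μ.restrict (Ici t)) =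
      max (φ t * essSup F (μ.restrict (Ioc a t)))
        (essSup (fun y => φ y * F y) (μ.restrict (Ici t))) :=
  (essSup_mul_essSup_restrict_Ioc_le hφ).antisymm (le_essSup_mul_essSup_restrict_Ioc hat hφc)

end EssSupIoc

theorem stmt_4_general (u b f : ℝ → ℝ≥0∞)
    (hucont : ContinuousOn u (Ioi (0 : ℝ)))
    (hB : ∀ t : ℝ, 0 < t →
      0 < (∫⁻ y in Ioc 0 t, b y) ∧ (∫⁻ y in Ioc 0 t, b y) < ⊤)
    (huB : ∀ x y : ℝ, 0 < y → y ≤ x →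
      u x / (∫⁻ s in Ioc 0 x, b s) ≤ u y / (∫⁻ s in Ioc 0 y, b s)) :
    ∀ t : ℝ, 0 < t →
      essSup (fun τ => (u τ / (∫⁻ s in Ioc 0 τ, b s))
            * essSup (fun y => f y * ∫⁻ s in Ioc 0 y, b s)
                (volume.restrict (Ioc 0 τ)))
          (volume.restrict (Ici t))
        = max
            ((u t / (∫⁻ s in Ioc 0 t, b s))
              * essSup (fun y => f y * ∫⁻ s in Ioc 0 y, b s)
                  (volume.restrict (Ioc 0 t)))
            (essSup (fun y => f y * u y) (volume.restrict (Ici t))) := by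
  intro t ht
  have hBcont : ∀ y > 0, ContinuousWithinAt (fun x => ∫⁻ s in Ioc 0 x, b s) (Ioi y) y :=
    fun y hy => by
      simpa only [withDensity_apply b measurableSet_Ioc] using
        Measure.continuousWithinAt_Ioi_measure_Ioc (ν := volume.withDensity b) (lt_add_one y)
          (by rw [withDensity_apply b measurableSet_Ioc]; exact (hB _ (hy.trans (lt_add_one y))).2.ne)
  have hφcont : ∀ y ≥ t, ContinuousWithinAt (fun x => u x / ∫⁻ s in Ioc 0 x, b s) (Ioi y) y := by
    intro y hy
    have hy0 := ht.trans_le hy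
    exact ENNReal.Tendsto.div ((hucont y hy0).mono (Ioi_subset_Ioi hy0.le))
      (Or.inr (hB y hy0).1.ne') (hBcont y hy0) (Or.inl (hB y hy0).2.ne)
  refine (essSup_mul_essSup_restrict_Ioc ht (fun x hx y _ hxy => huB y x (ht.trans_le hx) hxy)
    hφcont).trans (congrArg (max _) (essSup_congr_ae ?_))
  filter_upwards [ae_restrict_mem measurableSet_Ici] with y (hy : t ≤ y)
  have hy0 := ht.trans_le hy
  rw [mul_left_comm, ENNReal.div_mul_cancel (hB y hy0).1.ne' (hB y hy0).2.ne]

/-- If `u` is a continuous weight with `u/B` non-increasing (where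
`B(t) = ∫₀ᵗ b`, `0 < B < ∞`) and `f ≥ 0` is measurable, then for every `t > 0`:
`ess sup_{t ≤ τ} (u(τ)/B(τ)) · ess sup_{0 < y ≤ τ} f(y)B(y)
  = max{(u(t)/B(t)) ess sup_{0 < y ≤ t} f(y)B(y), ess sup_{t ≤ y} f(y)u(y)}`. -/
theorem stmt_4 (u b f : ℝ → ℝ≥0∞)
    (hu : Measurable u) (hb : Measurable b) (hf : Measurable f)
    (hucont : ContinuousOn u (Ioi (0 : ℝ)))
    (hB : ∀ t : ℝ, 0 < t →
      0 < (∫⁻ y in Ioc 0 t, b y) ∧ (∫⁻ y in Ioc 0 t, b y) < ⊤)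
    (huB : ∀ x y : ℝ, 0 < y → y ≤ x →
      u x / (∫⁻ s in Ioc 0 x, b s) ≤ u y / (∫⁻ s in Ioc 0 y, b s)) :
    ∀ t : ℝ, 0 < t →
      essSup (fun τ => (u τ / (∫⁻ s in Ioc 0 τ, b s))
            * essSup (fun y => f y * ∫⁻ s in Ioc 0 y, b s)
                (volume.restrict (Ioc 0 τ)))
          (volume.restrict (Ici t))
        = max
            ((u t / (∫⁻ s in Ioc 0 t, b s))
              * essSup (fun y => f y * ∫⁻ s in Ioc 0 y, b s)
                  (volume.restrict (Ioc 0 t)))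
            (essSup (fun y => f y * u y) (volume.restrict (Ici t))) :=
  stmt_4_general u b f hucont hB huB
end

section
/- For every locally integrable f on ℝⁿ, every γ ∈ (0,n), and every t > 0, the non-increasing rearrangement of the fractional maximal function satisfies (M_γ f)*(t) ≤ C sup_{t ≤ τ < ∞} τ^{γ/n − 1} ∫₀^τ f*(y) dy, with C depending only on n and γ. -/
/-! Let `S` be the supremum on the right. By the Hardy–Littlewood inequality
`∫_Q f ≤ ∫₀^{|Q|} f*`, every cube `Q` with `|Q|^{γ/n-1} ∫_Q f > λ > S` has `|Q| < t`, so only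
cubes of bounded size enter the level set `{M_γ f > λ}`. If that set had measure `> t`, the Vitali
covering lemma would give finitely many disjoint such cubes of total measure `σ > 4⁻ⁿ t`;
subadditivity of `x ↦ x^{1-γ/n}` and Hardy–Littlewood on their union give
`λ ≤ σ^{γ/n-1} ∫₀^σ f* ≤ 4ⁿ S`, a contradiction. -/

open MeasureTheory Set
open scoped ENNReal

def cube17 (n : ℕ) (a : Fin n → ℝ) (h : ℝ) : Set (Fin n → ℝ) :=
  univ.pi fun i => Icc (a i) (a i + h)

/-- The fractional maximal operator
`M_γ f(x) = sup_{Q ∋ x} |Q|^{γ/n-1} ∫_Q f`, the supremum being over axis-parallel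
cubes `Q` containing `x`. -/
noncomputable def fracMax17 (n : ℕ) (γ : ℝ) (f : (Fin n → ℝ) → ℝ≥0∞)
    (x : Fin n → ℝ) : ℝ≥0∞ :=
  ⨆ (a : Fin n → ℝ) (h : ℝ) (_ : 0 < h ∧ x ∈ cube17 n a h),
    (ENNReal.ofReal h ^ (n : ℝ)) ^ (γ / n - 1) * ∫⁻ y in cube17 n a h, f y

/-- The non-increasing rearrangement
`g*(t) = inf {λ : |{x : g(x) > λ}| ≤ t}` of `g : ℝⁿ → [0,∞]`. -/
noncomputable def rearr17 (n : ℕ) (g : (Fin n → ℝ) → ℝ≥0∞) (t : ℝ) : ℝ≥0∞ :=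
  sInf {l : ℝ≥0∞ | volume {x | l < g x} ≤ ENNReal.ofReal t}

theorem lintegral_eq_lintegral_meas_ofReal_lt {α : Type*} [MeasurableSpace α] (μ : Measure α)
    [SFinite μ] {f : α → ℝ≥0∞} (hf : Measurable f) :
    ∫⁻ x, f x ∂μ = ∫⁻ t in Ioi (0 : ℝ), μ {x | ENNReal.ofReal t < f x} := by
  have hlevel : ∀ c : ℝ≥0∞, MeasurableSet {t : ℝ | ENNReal.ofReal t < c} :=
    fun c => measurableSet_lt ENNReal.measurable_ofReal measurable_const
  have hvolume (c : ℝ≥0∞) : volume.restrict (Ioi (0 : ℝ)) {t | ENNReal.ofReal t < c} = c := by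
    rw [Measure.restrict_apply (hlevel c)]
    rcases eq_or_ne c ⊤ with rfl | hc
    · simp [Real.volume_Ioi]
    · have : {t : ℝ | ENNReal.ofReal t < c} ∩ Ioi 0 = Ioo 0 c.toReal := by
        ext t
        simp only [mem_inter_iff, mem_ofPred_eq, mem_Ioi, mem_Ioo]
        exact ⟨fun h => ⟨h.2, (ENNReal.ofReal_lt_iff_lt_toReal h.2.le hc).1 h.1⟩,
          fun h => ⟨(ENNReal.ofReal_lt_iff_lt_toReal h.1.le hc).2 h.2, h.1⟩⟩
      rw [this, Real.volume_Ioo, sub_zero, ENNReal.ofReal_toReal hc]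
  have hmeas :
      Measurable ({p : α × ℝ | ENNReal.ofReal p.2 < f p.1}.indicator (1 : α × ℝ → ℝ≥0∞)) :=
    measurable_one.indicator
      (measurableSet_lt (ENNReal.measurable_ofReal.comp measurable_snd) (hf.comp measurable_fst))
  calc ∫⁻ x, f x ∂μ
      = ∫⁻ x, (∫⁻ t in Ioi (0 : ℝ), {t | ENNReal.ofReal t < f x}.indicator 1 t) ∂μ := by
        simp_rw [lintegral_indicator_one (hlevel _), hvolume]
    _ = ∫⁻ t in Ioi (0 : ℝ), ∫⁻ x, {x | ENNReal.ofReal t < f x}.indicator 1 x ∂μ :=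
        lintegral_lintegral_swap hmeas.aemeasurable
    _ = ∫⁻ t in Ioi (0 : ℝ), μ {x | ENNReal.ofReal t < f x} := by
        simp_rw [lintegral_indicator_one (measurableSet_lt measurable_const hf)]

theorem measure_sInf_lt_le {α : Type*} [MeasurableSpace α] (μ : Measure α) (g : α → ℝ≥0∞)
    (c : ℝ≥0∞) : μ {x | sInf {l | μ {x | l < g x} ≤ c} < g x} ≤ c := by
  set m := sInf {l | μ {x | l < g x} ≤ c}
  rcases eq_or_ne m ⊤ with hm | hm
  · simp [hm]
  obtain ⟨u, hu_anti, hu_mem, hu_lim⟩ := exists_seq_strictAnti_tendsto' hm.lt_top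
  have hunion : {x | m < g x} = ⋃ k, {x | u k < g x} := by
    ext x
    simp only [mem_ofPred_eq, mem_iUnion]
    exact ⟨fun hx => (hu_lim.eventually (gt_mem_nhds hx)).exists,
      fun ⟨k, hk⟩ => (hu_mem k).1.trans hk⟩
  have hmono : Monotone fun k => {x | u k < g x} :=
    fun i j hij x hx => (hu_anti.antitone hij).trans_lt hx
  rw [hunion, hmono.measure_iUnion]
  refine iSup_le fun k => ?_
  obtain ⟨l, hl, hlu⟩ := sInf_lt_iff.1 (hu_mem k).1
  exact (measure_mono fun x hx => hlu.trans hx).trans hl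

namespace ENNReal

theorem rpow_sum_le_sum_rpow {ι : Type*} (s : Finset ι) (g : ι → ℝ≥0∞) {e : ℝ}
    (he0 : 0 < e) (he1 : e ≤ 1) : (∑ i ∈ s, g i) ^ e ≤ ∑ i ∈ s, g i ^ e := by
  classical
  induction s using Finset.cons_induction with
  | empty => simp [zero_rpow_of_pos he0]
  | cons a s ha ih =>
    rw [Finset.sum_cons, Finset.sum_cons]
    exact (rpow_add_le_add_rpow _ _ he0.le he1).trans (add_le_add_right ih _)

theorem le_rpow_neg_mul_iff {x : ℝ≥0∞} (hx0 : x ≠ 0) (hx : x ≠ ⊤) (e : ℝ) {a b : ℝ≥0∞} :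
    a ≤ x ^ (-e) * b ↔ x ^ e * a ≤ b := by
  rw [rpow_neg, mul_le_iff_le_inv (rpow_pos (pos_iff_ne_zero.2 hx0) hx).ne'
    (rpow_ne_top_of_ne_zero hx0 hx)]

theorem ofReal_rpow_neg_mul_le_mul_iSup {J : ℝ → ℝ≥0∞} (hJ : Monotone J) {e : ℝ} (he0 : 0 ≤ e)
    (he1 : e ≤ 1) {K : ℝ≥0∞} (hK : 1 ≤ K) {s t : ℝ} (hs : 0 < s)
    (hts : ENNReal.ofReal t ≤ K * ENNReal.ofReal s) :
    ENNReal.ofReal s ^ (-e) * J s ≤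
      K * ⨆ τ : {τ : ℝ // t ≤ τ}, ENNReal.ofReal τ.1 ^ (-e) * J τ.1 := by
  rcases le_or_gt t s with hts_le | hst
  · exact (le_iSup_of_le (ι := {τ : ℝ // t ≤ τ}) ⟨s, hts_le⟩ le_rfl).trans
      (le_mul_of_one_le_left' hK)
  have hs0 : ENNReal.ofReal s ^ e ≠ 0 := (rpow_pos (ofReal_pos.2 hs) ofReal_ne_top).ne'
  have hpow : ENNReal.ofReal s ^ (-e) ≤ K * ENNReal.ofReal t ^ (-e) := by
    rw [rpow_neg, rpow_neg, ← div_eq_mul_inv,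
      ENNReal.le_div_iff_mul_le (Or.inl (rpow_pos (ofReal_pos.2 (hs.trans hst)) ofReal_ne_top).ne')
        (Or.inl (rpow_ne_top_of_nonneg he0 ofReal_ne_top)),
      ENNReal.inv_mul_le_iff hs0 (rpow_ne_top_of_nonneg he0 ofReal_ne_top)]
    calc ENNReal.ofReal t ^ e ≤ (K * ENNReal.ofReal s) ^ e := rpow_le_rpow hts he0
      _ = K ^ e * ENNReal.ofReal s ^ e := mul_rpow_of_nonneg _ _ he0
      _ ≤ K ^ (1 : ℝ) * ENNReal.ofReal s ^ e :=
          mul_le_mul_left (rpow_le_rpow_of_exponent_le hK he1) _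
      _ = ENNReal.ofReal s ^ e * K := by rw [rpow_one, mul_comm]
  calc ENNReal.ofReal s ^ (-e) * J s ≤ K * (ENNReal.ofReal t ^ (-e) * J t) := by
        rw [← mul_assoc]
        exact mul_le_mul' hpow (hJ hst.le)
    _ ≤ K * ⨆ τ : {τ : ℝ // t ≤ τ}, ENNReal.ofReal τ.1 ^ (-e) * J τ.1 :=
        mul_le_mul_right (le_iSup_of_le (ι := {τ : ℝ // t ≤ τ}) ⟨t, le_rfl⟩ le_rfl) K

end ENNReal

section Rearrangement

variable {n : ℕ} {f : (Fin n → ℝ) → ℝ≥0∞}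

theorem rearr17_antitone : Antitone (rearr17 n f) :=
  fun _ _ h => sInf_le_sInf fun _ hl => hl.trans (ENNReal.ofReal_le_ofReal h)

theorem rearr17_le_iff {y : ℝ} {l : ℝ≥0∞} :
    rearr17 n f y ≤ l ↔ volume {x | l < f x} ≤ ENNReal.ofReal y :=
  ⟨fun h => (measure_mono fun _ hx => h.trans_lt hx).trans (measure_sInf_lt_le _ _ _),
    fun h => sInf_le h⟩

/-- Hardy–Littlewood inequality. -/
theorem setLIntegral_le_lintegral_rearr17 (hf : Measurable f) {U : Set (Fin n → ℝ)} {s : ℝ}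
    (hUs : volume U = ENNReal.ofReal s) :
    ∫⁻ x in U, f x ≤ ∫⁻ y in Ioc 0 s, rearr17 n f y := by
  rw [lintegral_eq_lintegral_meas_ofReal_lt _ hf,
    lintegral_eq_lintegral_meas_ofReal_lt _ rearr17_antitone.measurable]
  refine lintegral_mono fun t => ?_
  set D := volume {x | ENNReal.ofReal t < f x}
  -- `{f* > t}` is the initial interval of length `D`, so its part in `(0, s]` has measure
  -- `min s D`, which bounds `|{f > t} ∩ U|`
  have hlevel : {y | ENNReal.ofReal t < rearr17 n f y} = {y | ENNReal.ofReal y < D} := by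
    ext y
    simpa only [mem_ofPred_eq, not_le] using rearr17_le_iff.not
  rw [Measure.restrict_apply (measurableSet_lt measurable_const hf),
    Measure.restrict_apply' measurableSet_Ioc, hlevel]
  rcases le_or_gt D (ENNReal.ofReal s) with hDs | hsD
  · have hD : D ≠ ⊤ := ne_top_of_le_ne_top ENNReal.ofReal_ne_top hDs
    have hsub : Ioo 0 D.toReal ⊆ {y | ENNReal.ofReal y < D} ∩ Ioc 0 s := by
      rintro y ⟨hy0, hyD⟩
      have hyD' : ENNReal.ofReal y < D := (ENNReal.ofReal_lt_iff_lt_toReal hy0.le hD).2 hyD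
      exact ⟨hyD', hy0, (ENNReal.ofReal_lt_ofReal_iff'.1 (hyD'.trans_le hDs)).1.le⟩
    calc volume ({x | ENNReal.ofReal t < f x} ∩ U) ≤ D := measure_mono inter_subset_left
      _ = volume (Ioo 0 D.toReal) := by rw [Real.volume_Ioo, sub_zero, ENNReal.ofReal_toReal hD]
      _ ≤ _ := measure_mono hsub
  · have hsub : Ioc 0 s ⊆ {y | ENNReal.ofReal y < D} ∩ Ioc 0 s :=
      fun y hy => ⟨(ENNReal.ofReal_le_ofReal hy.2).trans_lt hsD, hy⟩
    calc volume ({x | ENNReal.ofReal t < f x} ∩ U) ≤ volume U := measure_mono inter_subset_right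
      _ = volume (Ioc 0 s) := by rw [hUs, Real.volume_Ioc, sub_zero]
      _ ≤ _ := measure_mono hsub

end Rearrangement

section Cubes

variable {n : ℕ}

theorem measurableSet_cube17 (a : Fin n → ℝ) (h : ℝ) : MeasurableSet (cube17 n a h) :=
  .univ_pi fun _ => measurableSet_Icc

theorem volume_cube17 (a : Fin n → ℝ) (h : ℝ) :
    volume (cube17 n a h) = ENNReal.ofReal h ^ n := by
  rw [cube17, volume_pi_pi]
  simp [Real.volume_Icc]

theorem volume_cube17_ne_zero (a : Fin n → ℝ) {h : ℝ} (hh : 0 < h) :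
    volume (cube17 n a h) ≠ 0 := by
  rw [volume_cube17]
  exact pow_ne_zero n (ENNReal.ofReal_pos.2 hh).ne'

theorem volume_cube17_lt_top (a : Fin n → ℝ) (h : ℝ) : volume (cube17 n a h) < ⊤ := by
  rw [volume_cube17]
  exact ENNReal.pow_lt_top ENNReal.ofReal_lt_top

theorem cube17_eq_closedBall (a : Fin n → ℝ) {h : ℝ} (hh : 0 ≤ h) :
    cube17 n a h = Metric.closedBall (fun i => a i + h / 2) (h / 2) := by
  rw [closedBall_pi _ (by linarith), cube17]
  refine pi_congr rfl fun i _ => ?_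
  rw [Real.closedBall_eq_Icc]
  congr 1 <;> ring

theorem volume_closedBall_four_mul (a : Fin n → ℝ) {h : ℝ} (hh : 0 ≤ h) :
    volume (Metric.closedBall (fun i => a i + h / 2) (4 * (h / 2))) =
      4 ^ n * volume (cube17 n a h) := by
  rw [Real.volume_pi_closedBall _ (by linarith), volume_cube17, Fintype.card_fin,
    ← ENNReal.ofReal_pow hh, show 2 * (4 * (h / 2)) = 4 * h by ring, mul_pow,
    ENNReal.ofReal_mul (by positivity), ENNReal.ofReal_pow (by norm_num)]
  norm_num

/-- Vitali covering lemma for cubes of bounded side length. -/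
theorem exists_pairwiseDisjoint_cube17_lt_sum {T : Set ((Fin n → ℝ) × ℝ)} {R : ℝ}
    (hT : ∀ p ∈ T, 0 < p.2 ∧ p.2 ≤ R) {c : ℝ≥0∞}
    (hc : c < volume (⋃ p ∈ T, cube17 n p.1 p.2)) :
    ∃ F : Finset ((Fin n → ℝ) × ℝ), ↑F ⊆ T ∧
      (F : Set ((Fin n → ℝ) × ℝ)).PairwiseDisjoint (fun p => cube17 n p.1 p.2) ∧
      c < 4 ^ n * ∑ p ∈ F, volume (cube17 n p.1 p.2) := by
  set center : (Fin n → ℝ) × ℝ → Fin n → ℝ := fun p i => p.1 i + p.2 / 2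
  have hball : ∀ p ∈ T, cube17 n p.1 p.2 = Metric.closedBall (center p) (p.2 / 2) :=
    fun p hp => cube17_eq_closedBall p.1 (hT p hp).1.le
  obtain ⟨u, huT, hdisj, hcover⟩ :=
    Vitali.exists_disjoint_subfamily_covering_enlargement_closedBall T center (fun p => p.2 / 2)
      (R / 2) (fun p hp => by linarith [(hT p hp).2]) 4 (by norm_num)
  have hu : u.Countable := hdisj.countable_of_nonempty_interior fun p hp =>
    (Metric.nonempty_ball.2 (half_pos (hT p (huT hp)).1)).mono
      (interior_maximal Metric.ball_subset_closedBall Metric.isOpen_ball)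
  have hvol :
      volume (⋃ p ∈ T, cube17 n p.1 p.2) ≤ ∑' p : u, 4 ^ n * volume (cube17 n p.1.1 p.1.2) :=
    calc volume (⋃ p ∈ T, cube17 n p.1 p.2)
        ≤ volume (⋃ p ∈ u, Metric.closedBall (center p) (4 * (p.2 / 2))) := by
          refine measure_mono (iUnion₂_subset fun p hp => ?_)
          obtain ⟨q, hq, hpq⟩ := hcover p hp
          rw [hball p hp]
          exact hpq.trans
            (subset_biUnion_of_mem (u := fun p => Metric.closedBall (center p) (4 * (p.2 / 2))) hq)
      _ ≤ ∑' p : u, volume (Metric.closedBall (center p) (4 * (p.1.2 / 2))) :=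
          measure_biUnion_le _ hu _
      _ = ∑' p : u, 4 ^ n * volume (cube17 n p.1.1 p.1.2) :=
          tsum_congr fun p => volume_closedBall_four_mul _ (hT p (huT p.2)).1.le
  rw [ENNReal.tsum_mul_left, ENNReal.tsum_eq_iSup_sum, ENNReal.mul_iSup] at hvol
  obtain ⟨F, hF⟩ := lt_iSup_iff.1 (hc.trans_le hvol)
  have hFu : ↑(F.map (Function.Embedding.subtype _)) ⊆ u := by
    rw [Finset.coe_map]
    exact image_subset_iff.2 fun p _ => p.2
  exact ⟨_, hFu.trans huT, (hdisj.subset hFu).mono_on fun p hp => (hball p (huT (hFu hp))).le,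
    by rwa [Finset.sum_map]⟩

end Cubes

noncomputable def cubeFracAvg (n : ℕ) (γ : ℝ) (f : (Fin n → ℝ) → ℝ≥0∞) (p : (Fin n → ℝ) × ℝ) :
    ℝ≥0∞ :=
  (ENNReal.ofReal p.2 ^ (n : ℝ)) ^ (γ / n - 1) * ∫⁻ y in cube17 n p.1 p.2, f y

noncomputable def fracRearrSup (n : ℕ) (γ : ℝ) (f : (Fin n → ℝ) → ℝ≥0∞) (t : ℝ) : ℝ≥0∞ :=
  ⨆ τ : {τ : ℝ // t ≤ τ},
    ENNReal.ofReal τ.1 ^ (γ / n - 1) * ∫⁻ y in Ioc (0 : ℝ) τ.1, rearr17 n f y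

section FractionalMaximal

variable {n : ℕ} {γ : ℝ} {f : (Fin n → ℝ) → ℝ≥0∞}

theorem cubeFracAvg_eq (p : (Fin n → ℝ) × ℝ) :
    cubeFracAvg n γ f p =
      volume (cube17 n p.1 p.2) ^ (γ / n - 1) * ∫⁻ y in cube17 n p.1 p.2, f y := by
  rw [cubeFracAvg, ENNReal.rpow_natCast, volume_cube17]

theorem cubeFracAvg_le_fracRearrSup (hf : Measurable f) {p : (Fin n → ℝ) × ℝ} {t : ℝ}
    (hp : 0 ≤ p.2) (htp : t ≤ p.2 ^ n) : cubeFracAvg n γ f p ≤ fracRearrSup n γ f t := by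
  have hvol : volume (cube17 n p.1 p.2) = ENNReal.ofReal (p.2 ^ n) := by
    rw [volume_cube17, ENNReal.ofReal_pow hp]
  rw [cubeFracAvg_eq, hvol]
  exact (mul_le_mul_right (setLIntegral_le_lintegral_rearr17 hf hvol) _).trans
    (le_iSup_of_le (ι := {τ : ℝ // t ≤ τ}) ⟨p.2 ^ n, htp⟩ le_rfl)

theorem rpow_sum_volume_mul_le_lintegral_rearr17 (hf : Measurable f) {e : ℝ} (he0 : 0 < e)
    (he1 : e ≤ 1) {F : Finset ((Fin n → ℝ) × ℝ)}
    (hF : (F : Set ((Fin n → ℝ) × ℝ)).PairwiseDisjoint fun p => cube17 n p.1 p.2) {l : ℝ≥0∞}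
    (hl : ∀ p ∈ F, volume (cube17 n p.1 p.2) ^ e * l ≤ ∫⁻ x in cube17 n p.1 p.2, f x) :
    (∑ p ∈ F, volume (cube17 n p.1 p.2)) ^ e * l ≤
      ∫⁻ y in Ioc 0 (∑ p ∈ F, volume (cube17 n p.1 p.2)).toReal, rearr17 n f y := by
  have hmeas : ∀ p ∈ F, MeasurableSet (cube17 n p.1 p.2) := fun p _ => measurableSet_cube17 _ _
  have hvol : volume (⋃ p ∈ F, cube17 n p.1 p.2) =
      ENNReal.ofReal (∑ p ∈ F, volume (cube17 n p.1 p.2)).toReal := by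
    rw [measure_biUnion_finset hF hmeas, ENNReal.ofReal_toReal
      (ENNReal.sum_ne_top.2 fun p _ => (volume_cube17_lt_top _ _).ne)]
  calc (∑ p ∈ F, volume (cube17 n p.1 p.2)) ^ e * l
      ≤ (∑ p ∈ F, volume (cube17 n p.1 p.2) ^ e) * l :=
        mul_le_mul_left (ENNReal.rpow_sum_le_sum_rpow _ _ he0 he1) l
    _ = ∑ p ∈ F, volume (cube17 n p.1 p.2) ^ e * l := Finset.sum_mul _ _ _
    _ ≤ ∑ p ∈ F, ∫⁻ x in cube17 n p.1 p.2, f x := Finset.sum_le_sum hl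
    _ = ∫⁻ x in ⋃ p ∈ F, cube17 n p.1 p.2, f x := (lintegral_biUnion_finset hF hmeas f).symm
    _ ≤ _ := setLIntegral_le_lintegral_rearr17 hf hvol

theorem le_mul_fracRearrSup_of_pairwiseDisjoint (hγ0 : 0 ≤ γ) (hγn : γ < n) (hf : Measurable f)
    {F : Finset ((Fin n → ℝ) × ℝ)}
    (hF : (F : Set ((Fin n → ℝ) × ℝ)).PairwiseDisjoint fun p => cube17 n p.1 p.2) {l : ℝ≥0∞}
    (hlF : ∀ p ∈ F, 0 < p.2 ∧ l < cubeFracAvg n γ f p) {t : ℝ}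
    (ht : ENNReal.ofReal t < 4 ^ n * ∑ p ∈ F, volume (cube17 n p.1 p.2)) :
    l ≤ 4 ^ n * fracRearrSup n γ f t := by
  have hn : (0 : ℝ) < n := hγ0.trans_lt hγn
  set e := 1 - γ / n
  have he0 : 0 < e := sub_pos.2 ((div_lt_one hn).2 hγn)
  have he1 : e ≤ 1 := sub_le_self _ (div_nonneg hγ0 hn.le)
  have hexp : γ / n - 1 = -e := by ring
  set σ := ∑ p ∈ F, volume (cube17 n p.1 p.2)
  have hσ0 : σ ≠ 0 := fun h => by simp [h] at ht
  have hσ : σ ≠ ⊤ := ENNReal.sum_ne_top.2 fun p _ => (volume_cube17_lt_top _ _).ne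
  have hcube : ∀ p ∈ F, volume (cube17 n p.1 p.2) ^ e * l ≤ ∫⁻ x in cube17 n p.1 p.2, f x := by
    intro p hp
    have hlp := (hlF p hp).2
    rw [cubeFracAvg_eq, hexp] at hlp
    exact (ENNReal.le_rpow_neg_mul_iff (volume_cube17_ne_zero p.1 (hlF p hp).1)
      (volume_cube17_lt_top _ _).ne e).1 hlp.le
  have hlσ : l ≤ ENNReal.ofReal σ.toReal ^ (-e) * ∫⁻ y in Ioc 0 σ.toReal, rearr17 n f y := by
    rw [ENNReal.ofReal_toReal hσ, ENNReal.le_rpow_neg_mul_iff hσ0 hσ]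
    exact rpow_sum_volume_mul_le_lintegral_rearr17 hf he0 he1 hF hcube
  rw [fracRearrSup, hexp]
  exact hlσ.trans (ENNReal.ofReal_rpow_neg_mul_le_mul_iSup
    (J := fun τ => ∫⁻ y in Ioc 0 τ, rearr17 n f y)
    (fun _ _ h => lintegral_mono_set (Ioc_subset_Ioc_right h)) he0.le he1
    (one_le_pow₀ (by norm_num : (1 : ℝ≥0∞) ≤ 4))
    (ENNReal.toReal_pos hσ0 hσ) (by rw [ENNReal.ofReal_toReal hσ]; exact ht.le))

theorem volume_lt_fracMax17_le (hγ0 : 0 ≤ γ) (hγn : γ < n) (hf : Measurable f) {t : ℝ}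
    {l : ℝ≥0∞} (hl : 4 ^ n * fracRearrSup n γ f t < l) :
    volume {x | l < fracMax17 n γ f x} ≤ ENNReal.ofReal t := by
  set T := {p : (Fin n → ℝ) × ℝ | 0 < p.2 ∧ l < cubeFracAvg n γ f p}
  have hcover : {x | l < fracMax17 n γ f x} ⊆ ⋃ p ∈ T, cube17 n p.1 p.2 := by
    intro x hx
    simp only [mem_ofPred_eq, fracMax17, lt_iSup_iff] at hx
    obtain ⟨a, h, ⟨hh, hxQ⟩, hlQ⟩ := hx
    exact mem_biUnion (x := (a, h)) ⟨hh, hlQ⟩ hxQ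
  have hSl : fracRearrSup n γ f t < l :=
    (le_mul_of_one_le_left' (one_le_pow₀ (by norm_num))).trans_lt hl
  have hn : n ≠ 0 := by rintro rfl; simp at hγn; linarith
  have hT : ∀ p ∈ T, 0 < p.2 ∧ p.2 ≤ max 1 t := by
    intro p ⟨hp, hlp⟩
    have hpt : p.2 ^ n < t := lt_of_not_ge fun h =>
      hSl.not_ge (hlp.trans_le (cubeFracAvg_le_fracRearrSup hf hp.le h)).le
    refine ⟨hp, ?_⟩
    rcases le_or_gt p.2 1 with hp1 | hp1
    · exact hp1.trans (le_max_left _ _)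
    · exact ((le_self_pow₀ hp1.le hn).trans hpt.le).trans (le_max_right _ _)
  by_contra! hcon
  obtain ⟨F, hFT, hFdisj, hF⟩ :=
    exists_pairwiseDisjoint_cube17_lt_sum hT (hcon.trans_le (measure_mono hcover))
  exact hl.not_ge
    (le_mul_fracRearrSup_of_pairwiseDisjoint hγ0 hγn hf hFdisj (fun p hp => hFT hp) hF)

end FractionalMaximal

theorem stmt_17_general (n : ℕ) (γ : ℝ) (hγ0 : 0 < γ) (hγn : γ < n) :
    ∃ C : ℝ≥0∞, 0 < C ∧ C < ⊤ ∧
      ∀ f : (Fin n → ℝ) → ℝ≥0∞, Measurable f →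
        (∀ (a : Fin n → ℝ) (h : ℝ), 0 < h → (∫⁻ y in cube17 n a h, f y) < ⊤) →
        ∀ t : ℝ, 0 < t →
          rearr17 n (fracMax17 n γ f) t
            ≤ C * ⨆ τ : {τ : ℝ // t ≤ τ},
                ENNReal.ofReal τ.1 ^ (γ / n - 1)
                  * ∫⁻ y in Ioc (0 : ℝ) τ.1, rearr17 n f y := by
  refine ⟨4 ^ n, by positivity, ENNReal.pow_lt_top (by norm_num), fun f hf _ t _ => ?_⟩
  exact le_of_forall_gt_imp_ge_of_dense fun l hl =>
    sInf_le (volume_lt_fracMax17_le hγ0.le hγn hf hl)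

/-- for every `n ≥ 1`, `γ ∈ (0,n)`, there is `C = C(n,γ)` such that for
every locally integrable `f ≥ 0` on `ℝⁿ` and every `t > 0`,
`(M_γ f)*(t) ≤ C sup_{t ≤ τ < ∞} τ^{γ/n-1} ∫₀^τ f*(y) dy`. -/
theorem stmt_17 (n : ℕ) (hn : 0 < n) (γ : ℝ) (hγ0 : 0 < γ) (hγn : γ < n) :
    ∃ C : ℝ≥0∞, 0 < C ∧ C < ⊤ ∧
      ∀ f : (Fin n → ℝ) → ℝ≥0∞, Measurable f →
        (∀ (a : Fin n → ℝ) (h : ℝ), 0 < h → (∫⁻ y in cube17 n a h, f y) < ⊤) →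
        ∀ t : ℝ, 0 < t →
          rearr17 n (fracMax17 n γ f) t
            ≤ C * ⨆ τ : {τ : ℝ // t ≤ τ},
                ENNReal.ofReal τ.1 ^ (γ / n - 1)
                  * ∫⁻ y in Ioc (0 : ℝ) τ.1, rearr17 n f y :=
  stmt_17_general n γ hγ0 hγn
end
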